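/- Let C_{χ̄}(x)⁻¹ : T_xM → ℝ^d be the Oseledets–Pesin reduction built from the norms S_{χ̄}(x) = ‖C_{χ̄}(x)⁻¹|_{E^s(x)}‖, U_{χ̄}(x) = ‖C_{χ̄}(x)⁻¹|_{E^u(x)}‖ and the angle α(x) between E^s(x) and E^u(x). Setting ρ_{χ̄}(x) := max(S_{χ̄}(x), U_{χ̄}(x), 1/|sin α(x)|), one has ρ_{χ̄}(x) ≤ ‖C_{χ̄}(x)⁻¹‖ ≤ √2 · ρ_{χ̄}(x)². -/

import Mathlib

open Filter Topology
open scoped ENNReal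

noncomputable section

variable {E : Type*} [NormedAddCommGroup E] [InnerProductSpace ℝ E]

/-- Forward products of the linear cocycle with generator `A` over the map `f`. -/
def cocycle {M : Type*} (f : M → M) (A : M → (E →L[ℝ] E)) : ℕ → M → (E →L[ℝ] E)
  | 0, _ => ContinuousLinearMap.id ℝ E
  | n + 1, x => cocycle f A n (f x) ∘L A x

/-- `Df^k` at `x` (forward derivative cocycle). -/
def fwdC {M : Type*} (f : Equiv.Perm M) (Df : M → (E ≃L[ℝ] E)) (k : ℕ) (x : M) :
    E →L[ℝ] E :=
  cocycle (⇑f) (fun y => (Df y : E →L[ℝ] E)) k x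

/-- `Df^{-k}` at `x` (backward derivative cocycle). -/
def bwdC {M : Type*} (f : Equiv.Perm M) (Df : M → (E ≃L[ℝ] E)) (k : ℕ) (x : M) :
    E →L[ℝ] E :=
  cocycle (⇑f.symm) (fun y => ((Df (f.symm y)).symm : E →L[ℝ] E)) k x

/-- The cosine of the minimal angle between two subspaces. -/
def maxCos (F G : Submodule ℝ E) : ℝ :=
  ⨆ p : {p : E × E // p.1 ∈ F ∧ p.2 ∈ G ∧ ‖p.1‖ = 1 ∧ ‖p.2‖ = 1},
    |(inner ℝ p.1.1 p.1.2 : ℝ)|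

/-- `|sin α(F,G)|` for the (minimal) angle `α` between the subspaces `F` and `G`. -/
def sinAngle (F G : Submodule ℝ E) : ℝ :=
  Real.sqrt (1 - maxCos F G ^ 2)

/-- The norm `S_χ̄(x) = ‖C_χ̄(x)⁻¹|_{E^s}‖` of the Oseledets–Pesin reduction on the
stable subspace. -/
def Snorm {M : Type*} (f : Equiv.Perm M) (Df : M → (E ≃L[ℝ] E)) (χbar : ℝ) (x : M)
    (Es : Submodule ℝ E) : ℝ :=
  ⨆ v : {v : E // v ∈ Es ∧ ‖v‖ = 1},
    Real.sqrt (2 * ∑' m : ℕ, ‖fwdC f Df m x v.1‖ ^ 2 * Real.exp (2 * m * χbar))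

/-- The norm `U_χ̄(x) = ‖C_χ̄(x)⁻¹|_{E^u}‖` of the Oseledets–Pesin reduction on the
unstable subspace. -/
def Unorm {M : Type*} (f : Equiv.Perm M) (Df : M → (E ≃L[ℝ] E)) (χbar : ℝ) (x : M)
    (Eu : Submodule ℝ E) : ℝ :=
  ⨆ v : {v : E // v ∈ Eu ∧ ‖v‖ = 1},
    Real.sqrt (2 * ∑' m : ℕ, ‖bwdC f Df m x v.1‖ ^ 2 * Real.exp (2 * m * χbar))

/-- The operator norm `‖C_χ̄(x)⁻¹‖` of the Oseledets–Pesin reduction: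
the supremum over unit vectors `v` of the Lyapunov norm
`(‖π_s v‖'_{x,s}² + ‖π_u v‖'_{x,u}²)^{1/2}`. -/
def CinvNorm {M : Type*} (f : Equiv.Perm M) (Df : M → (E ≃L[ℝ] E)) (χbar : ℝ) (x : M)
    (Es Eu : Submodule ℝ E) (hc : IsCompl Es Eu) : ℝ :=
  ⨆ v : {v : E // ‖v‖ = 1},
    Real.sqrt
      ((2 * ∑' m : ℕ,
          ‖fwdC f Df m x ((Es.linearProjOfIsCompl Eu hc) v.1 : E)‖ ^ 2 *
            Real.exp (2 * m * χbar)) +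
        2 * ∑' m : ℕ,
          ‖bwdC f Df m x ((Eu.linearProjOfIsCompl Es hc.symm) v.1 : E)‖ ^ 2 *
            Real.exp (2 * m * χbar))

lemma exists_clm_aux [FiniteDimensional ℝ E]
    (T : ℕ → E →L[ℝ] E) (w : ℕ → ℝ) (hw : ∀ m, 0 ≤ w m) (S : Submodule ℝ E)
    (hsum : ∀ v ∈ S, Summable fun m => ‖T m v‖ ^ 2 * w m) :
    ∃ L : S →L[ℝ] lp (fun _ : ℕ => E) 2,
      ∀ v : S, ‖L v‖ ^ 2 = ∑' m : ℕ, ‖T m (v : E)‖ ^ 2 * w m := by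
  have hrp : ∀ x : ℝ, 0 ≤ x → x ^ ((2 : ℝ≥0∞)).toReal = x ^ 2 := by
    intro x hx
    rw [show ((2 : ℝ≥0∞)).toReal = ((2 : ℕ) : ℝ) by norm_num, Real.rpow_natCast]
  have hFnorm : ∀ (v : E) (m : ℕ),
      ‖Real.sqrt (w m) • T m v‖ ^ 2 = ‖T m v‖ ^ 2 * w m := by
    intro v m
    rw [norm_smul, mul_pow, Real.norm_eq_abs, sq_abs, Real.sq_sqrt (hw m), mul_comm]
  have hmem : ∀ v : S, Memℓp (fun m => Real.sqrt (w m) • T m (v : E)) 2 := by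
    intro v
    apply memℓp_gen
    have h := hsum v v.2
    refine h.congr fun m => ?_
    rw [hrp _ (norm_nonneg _), hFnorm]
  let Φ : S →ₗ[ℝ] lp (fun _ : ℕ => E) 2 :=
    { toFun := fun v => ⟨fun m => Real.sqrt (w m) • T m (v : E), hmem v⟩
      map_add' := by
        intro a b
        apply lp.ext
        funext m
        show Real.sqrt (w m) • T m ((a : E) + (b : E)) = _
        simp [smul_add]
        rfl
      map_smul' := by
        intro c a
        apply lp.ext
        funext m
        show Real.sqrt (w m) • T m (c • (a : E)) = c • (Real.sqrt (w m) • T m (a : E))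
        rw [map_smul, smul_comm] }
  refine ⟨LinearMap.toContinuousLinearMap Φ, fun v => ?_⟩
  have h2 : (0:ℝ) < ((2 : ℝ≥0∞)).toReal := by norm_num
  have hn := lp.norm_rpow_eq_tsum h2 (Φ v)
  rw [hrp _ (norm_nonneg _)] at hn
  calc ‖LinearMap.toContinuousLinearMap Φ v‖ ^ 2 = ‖Φ v‖ ^ 2 := rfl
    _ = ∑' m : ℕ, ‖Real.sqrt (w m) • T m (v : E)‖ ^ ((2:ℝ≥0∞)).toReal := hn
    _ = ∑' m : ℕ, ‖T m (v : E)‖ ^ 2 * w m := by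
        refine tsum_congr fun m => ?_
        rw [hrp _ (norm_nonneg _), hFnorm]

set_option maxHeartbeats 1000000 in
/-- **Norm estimate for the Oseledets–Pesin reduction** (Lemma 7.2):
with `ρ_χ̄(x) = max (S_χ̄(x), U_χ̄(x), 1/|sin α(x)|)`, one has
`ρ_χ̄(x) ≤ ‖C_χ̄(x)⁻¹‖ ≤ √2 ρ_χ̄(x)²`. -/
theorem oseledets_pesin_reduction_norm_bounds
    [FiniteDimensional ℝ E] {M : Type*}
    (f : Equiv.Perm M) (Df : M → (E ≃L[ℝ] E)) (χbar : ℝ) (hχbar : 0 < χbar) (x : M)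
    (Es Eu : Submodule ℝ E) (hEs : Es ≠ ⊥) (hEu : Eu ≠ ⊥) (hc : IsCompl Es Eu)
    (hSsum : ∀ v ∈ Es,
      Summable fun m : ℕ => ‖fwdC f Df m x v‖ ^ 2 * Real.exp (2 * m * χbar))
    (hUsum : ∀ v ∈ Eu,
      Summable fun m : ℕ => ‖bwdC f Df m x v‖ ^ 2 * Real.exp (2 * m * χbar)) :
    max (Snorm f Df χbar x Es) (max (Unorm f Df χbar x Eu) (sinAngle Es Eu)⁻¹)
        ≤ CinvNorm f Df χbar x Es Eu hc ∧
      CinvNorm f Df χbar x Es Eu hc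
        ≤ Real.sqrt 2 *
            max (Snorm f Df χbar x Es) (max (Unorm f Df χbar x Eu) (sinAngle Es Eu)⁻¹) ^ 2 := by
  classical
  have h2nn : (0:ℝ) ≤ 2 := by norm_num
  obtain ⟨Ls, hLs⟩ := exists_clm_aux (fun m => fwdC f Df m x)
    (fun m : ℕ => Real.exp (2 * m * χbar)) (fun m => (Real.exp_pos _).le) Es hSsum
  obtain ⟨Lu, hLu⟩ := exists_clm_aux (fun m => bwdC f Df m x)
    (fun m : ℕ => Real.exp (2 * m * χbar)) (fun m => (Real.exp_pos _).le) Eu hUsum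
  -- the projections
  set πs := Es.linearProjOfIsCompl Eu hc with hπs_def
  set πu := Eu.linearProjOfIsCompl Es hc.symm with hπu_def
  -- lower bound for ‖Ls v‖, ‖Lu v‖
  have hnorm_le_s : ∀ v : Es, ‖(v : E)‖ ≤ ‖Ls v‖ := by
    intro v
    have h1 : ‖(v : E)‖ ^ 2 ≤ ‖Ls v‖ ^ 2 := by
      rw [hLs]
      calc ‖(v : E)‖ ^ 2
          = ‖fwdC f Df 0 x (v : E)‖ ^ 2 * Real.exp (2 * (0:ℕ) * χbar) := by
            simp [fwdC, cocycle]
        _ ≤ ∑' m : ℕ, ‖fwdC f Df m x (v : E)‖ ^ 2 * Real.exp (2 * m * χbar) :=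
            Summable.le_tsum (hSsum v v.2) 0 fun m _ => by positivity
    calc ‖(v : E)‖ = Real.sqrt (‖(v : E)‖ ^ 2) := (Real.sqrt_sq (norm_nonneg _)).symm
      _ ≤ Real.sqrt (‖Ls v‖ ^ 2) := Real.sqrt_le_sqrt h1
      _ = ‖Ls v‖ := Real.sqrt_sq (norm_nonneg _)
  have hnorm_le_u : ∀ v : Eu, ‖(v : E)‖ ≤ ‖Lu v‖ := by
    intro v
    have h1 : ‖(v : E)‖ ^ 2 ≤ ‖Lu v‖ ^ 2 := by
      rw [hLu]
      calc ‖(v : E)‖ ^ 2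
          = ‖bwdC f Df 0 x (v : E)‖ ^ 2 * Real.exp (2 * (0:ℕ) * χbar) := by
            simp [bwdC, cocycle]
        _ ≤ ∑' m : ℕ, ‖bwdC f Df m x (v : E)‖ ^ 2 * Real.exp (2 * m * χbar) :=
            Summable.le_tsum (hUsum v v.2) 0 fun m _ => by positivity
    calc ‖(v : E)‖ = Real.sqrt (‖(v : E)‖ ^ 2) := (Real.sqrt_sq (norm_nonneg _)).symm
      _ ≤ Real.sqrt (‖Lu v‖ ^ 2) := Real.sqrt_le_sqrt h1
      _ = ‖Lu v‖ := Real.sqrt_sq (norm_nonneg _)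
  -- nonemptiness
  have exS : ∃ v : E, v ∈ Es ∧ ‖v‖ = 1 := by
    obtain ⟨v, hv, hv0⟩ := Submodule.exists_mem_ne_zero_of_ne_bot hEs
    exact ⟨‖v‖⁻¹ • v, Es.smul_mem _ hv, norm_smul_inv_norm hv0⟩
  have exU : ∃ v : E, v ∈ Eu ∧ ‖v‖ = 1 := by
    obtain ⟨v, hv, hv0⟩ := Submodule.exists_mem_ne_zero_of_ne_bot hEu
    exact ⟨‖v‖⁻¹ • v, Eu.smul_mem _ hv, norm_smul_inv_norm hv0⟩
  haveI instS : Nonempty {v : E // v ∈ Es ∧ ‖v‖ = 1} := nonempty_subtype.2 exS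
  haveI instU : Nonempty {v : E // v ∈ Eu ∧ ‖v‖ = 1} := nonempty_subtype.2 exU
  haveI instE : Nonempty {v : E // ‖v‖ = 1} := by
    obtain ⟨v, _, hv1⟩ := exS; exact ⟨⟨v, hv1⟩⟩
  haveI instP : Nonempty {p : E × E // p.1 ∈ Es ∧ p.2 ∈ Eu ∧ ‖p.1‖ = 1 ∧ ‖p.2‖ = 1} := by
    obtain ⟨a, ha, ha1⟩ := exS; obtain ⟨b, hb, hb1⟩ := exU
    exact ⟨⟨(a, b), ha, hb, ha1, hb1⟩⟩
  -- maxCos facts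
  have hcbdd : BddAbove (Set.range fun p :
      {p : E × E // p.1 ∈ Es ∧ p.2 ∈ Eu ∧ ‖p.1‖ = 1 ∧ ‖p.2‖ = 1} =>
      |(inner ℝ p.1.1 p.1.2 : ℝ)|) := by
    refine ⟨1, ?_⟩
    rintro r ⟨p, rfl⟩
    calc |(inner ℝ p.1.1 p.1.2 : ℝ)| ≤ ‖p.1.1‖ * ‖p.1.2‖ := abs_real_inner_le_norm _ _
      _ = 1 := by rw [p.2.2.2.1, p.2.2.2.2, mul_one]
  have hcle : ∀ p : {p : E × E // p.1 ∈ Es ∧ p.2 ∈ Eu ∧ ‖p.1‖ = 1 ∧ ‖p.2‖ = 1},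
      |(inner ℝ p.1.1 p.1.2 : ℝ)| ≤ maxCos Es Eu := fun p => le_ciSup hcbdd p
  have hc0 : 0 ≤ maxCos Es Eu :=
    le_trans (abs_nonneg _) (hcle (Classical.arbitrary _))
  have hc1 : maxCos Es Eu ≤ 1 := by
    refine ciSup_le fun p => ?_
    calc |(inner ℝ p.1.1 p.1.2 : ℝ)| ≤ ‖p.1.1‖ * ‖p.1.2‖ := abs_real_inner_le_norm _ _
      _ = 1 := by rw [p.2.2.2.1, p.2.2.2.2, mul_one]
  have hinner : ∀ a ∈ Es, ∀ b ∈ Eu,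
      |(inner ℝ a b : ℝ)| ≤ maxCos Es Eu * (‖a‖ * ‖b‖) := by
    intro a ha b hb
    rcases eq_or_ne a 0 with rfl | ha0
    · simp [inner_zero_left]
    rcases eq_or_ne b 0 with rfl | hb0
    · simp [inner_zero_right]
    have hkey := hcle ⟨(‖a‖⁻¹ • a, ‖b‖⁻¹ • b),
      Es.smul_mem _ ha, Eu.smul_mem _ hb, norm_smul_inv_norm ha0, norm_smul_inv_norm hb0⟩
    have hrw : |(inner ℝ (‖a‖⁻¹ • a) (‖b‖⁻¹ • b) : ℝ)|
        = ‖a‖⁻¹ * (‖b‖⁻¹ * |(inner ℝ a b : ℝ)|) := by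
      rw [real_inner_smul_left, real_inner_smul_right, abs_mul, abs_mul,
        abs_inv, abs_norm, abs_inv, abs_norm]
    rw [hrw] at hkey
    have hapos : (0:ℝ) < ‖a‖ := norm_pos_iff.2 ha0
    have hbpos : (0:ℝ) < ‖b‖ := norm_pos_iff.2 hb0
    have := mul_le_mul_of_nonneg_left hkey (by positivity : (0:ℝ) ≤ ‖a‖ * ‖b‖)
    calc |(inner ℝ a b : ℝ)| = ‖a‖ * ‖b‖ * (‖a‖⁻¹ * (‖b‖⁻¹ * |(inner ℝ a b : ℝ)|)) := by
          field_simp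
      _ ≤ ‖a‖ * ‖b‖ * maxCos Es Eu := this
      _ = maxCos Es Eu * (‖a‖ * ‖b‖) := by ring
  -- rewriting the Snorm family
  have hΦS : ∀ v : {v : E // v ∈ Es ∧ ‖v‖ = 1},
      Real.sqrt (2 * ∑' m : ℕ, ‖fwdC f Df m x v.1‖ ^ 2 * Real.exp (2 * m * χbar))
        = Real.sqrt 2 * ‖Ls ⟨v.1, v.2.1⟩‖ := by
    intro v
    have h : (∑' m : ℕ, ‖fwdC f Df m x v.1‖ ^ 2 * Real.exp (2 * m * χbar))
        = ‖Ls ⟨v.1, v.2.1⟩‖ ^ 2 := (hLs ⟨v.1, v.2.1⟩).symm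
    rw [h, Real.sqrt_mul h2nn, Real.sqrt_sq (norm_nonneg _)]
  have hΦU : ∀ v : {v : E // v ∈ Eu ∧ ‖v‖ = 1},
      Real.sqrt (2 * ∑' m : ℕ, ‖bwdC f Df m x v.1‖ ^ 2 * Real.exp (2 * m * χbar))
        = Real.sqrt 2 * ‖Lu ⟨v.1, v.2.1⟩‖ := by
    intro v
    have h : (∑' m : ℕ, ‖bwdC f Df m x v.1‖ ^ 2 * Real.exp (2 * m * χbar))
        = ‖Lu ⟨v.1, v.2.1⟩‖ ^ 2 := (hLu ⟨v.1, v.2.1⟩).symm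
    rw [h, Real.sqrt_mul h2nn, Real.sqrt_sq (norm_nonneg _)]
  have hΦK : ∀ v : {v : E // ‖v‖ = 1},
      Real.sqrt ((2 * ∑' m : ℕ, ‖fwdC f Df m x ((πs v.1 : Es) : E)‖ ^ 2 *
            Real.exp (2 * m * χbar)) +
          2 * ∑' m : ℕ, ‖bwdC f Df m x ((πu v.1 : Eu) : E)‖ ^ 2 * Real.exp (2 * m * χbar))
        = Real.sqrt (2 * ‖Ls (πs v.1)‖ ^ 2 + 2 * ‖Lu (πu v.1)‖ ^ 2) := by
    intro v
    rw [hLs, hLu]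
  -- boundedness / sup facts for Snorm
  have hSbdd : BddAbove (Set.range fun v : {v : E // v ∈ Es ∧ ‖v‖ = 1} =>
      Real.sqrt (2 * ∑' m : ℕ, ‖fwdC f Df m x v.1‖ ^ 2 * Real.exp (2 * m * χbar))) := by
    refine ⟨Real.sqrt 2 * ‖Ls‖, ?_⟩
    rintro r ⟨v, rfl⟩
    refine le_trans (le_of_eq (hΦS v)) ?_
    have h1 : ‖Ls ⟨v.1, v.2.1⟩‖ ≤ ‖Ls‖ := by
      calc ‖Ls ⟨v.1, v.2.1⟩‖ ≤ ‖Ls‖ * ‖(⟨v.1, v.2.1⟩ : Es)‖ := Ls.le_opNorm _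
        _ = ‖Ls‖ := by
            rw [show ‖(⟨v.1, v.2.1⟩ : Es)‖ = ‖v.1‖ from rfl, v.2.2, mul_one]
    exact mul_le_mul_of_nonneg_left h1 (Real.sqrt_nonneg _)
  have hUbdd : BddAbove (Set.range fun v : {v : E // v ∈ Eu ∧ ‖v‖ = 1} =>
      Real.sqrt (2 * ∑' m : ℕ, ‖bwdC f Df m x v.1‖ ^ 2 * Real.exp (2 * m * χbar))) := by
    refine ⟨Real.sqrt 2 * ‖Lu‖, ?_⟩
    rintro r ⟨v, rfl⟩
    refine le_trans (le_of_eq (hΦU v)) ?_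
    have h1 : ‖Lu ⟨v.1, v.2.1⟩‖ ≤ ‖Lu‖ := by
      calc ‖Lu ⟨v.1, v.2.1⟩‖ ≤ ‖Lu‖ * ‖(⟨v.1, v.2.1⟩ : Eu)‖ := Lu.le_opNorm _
        _ = ‖Lu‖ := by
            rw [show ‖(⟨v.1, v.2.1⟩ : Eu)‖ = ‖v.1‖ from rfl, v.2.2, mul_one]
    exact mul_le_mul_of_nonneg_left h1 (Real.sqrt_nonneg _)
  have hS_ub : ∀ v : {v : E // v ∈ Es ∧ ‖v‖ = 1},
      Real.sqrt (2 * ∑' m : ℕ, ‖fwdC f Df m x v.1‖ ^ 2 * Real.exp (2 * m * χbar))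
        ≤ Snorm f Df χbar x Es := fun v => le_ciSup hSbdd v
  have hU_ub : ∀ v : {v : E // v ∈ Eu ∧ ‖v‖ = 1},
      Real.sqrt (2 * ∑' m : ℕ, ‖bwdC f Df m x v.1‖ ^ 2 * Real.exp (2 * m * χbar))
        ≤ Unorm f Df χbar x Eu := fun v => le_ciSup hUbdd v
  -- key scaling bounds
  have key_s : ∀ p : Es, Real.sqrt 2 * ‖Ls p‖ ≤ Snorm f Df χbar x Es * ‖(p : E)‖ := by
    intro p
    rcases eq_or_ne p 0 with rfl | hp0
    · simp
    have hpE : (p : E) ≠ 0 := fun h => hp0 (Subtype.ext h)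
    have hppos : (0:ℝ) < ‖(p : E)‖ := norm_pos_iff.2 hpE
    set u : {v : E // v ∈ Es ∧ ‖v‖ = 1} :=
      ⟨‖(p : E)‖⁻¹ • (p : E), Es.smul_mem _ p.2, norm_smul_inv_norm hpE⟩ with hu_def
    have h1 := hS_ub u
    rw [hΦS u] at h1
    have h2 : (⟨u.1, u.2.1⟩ : Es) = ‖(p : E)‖⁻¹ • p := rfl
    rw [h2, map_smul, norm_smul, norm_inv, norm_norm] at h1
    calc Real.sqrt 2 * ‖Ls p‖
        = ‖(p : E)‖ * (Real.sqrt 2 * (‖(p : E)‖⁻¹ * ‖Ls p‖)) := by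
          field_simp
      _ ≤ ‖(p : E)‖ * Snorm f Df χbar x Es :=
          mul_le_mul_of_nonneg_left h1 hppos.le
      _ = Snorm f Df χbar x Es * ‖(p : E)‖ := by ring
  have key_u : ∀ p : Eu, Real.sqrt 2 * ‖Lu p‖ ≤ Unorm f Df χbar x Eu * ‖(p : E)‖ := by
    intro p
    rcases eq_or_ne p 0 with rfl | hp0
    · simp
    have hpE : (p : E) ≠ 0 := fun h => hp0 (Subtype.ext h)
    have hppos : (0:ℝ) < ‖(p : E)‖ := norm_pos_iff.2 hpE
    set u : {v : E // v ∈ Eu ∧ ‖v‖ = 1} :=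
      ⟨‖(p : E)‖⁻¹ • (p : E), Eu.smul_mem _ p.2, norm_smul_inv_norm hpE⟩ with hu_def
    have h1 := hU_ub u
    rw [hΦU u] at h1
    have h2 : (⟨u.1, u.2.1⟩ : Eu) = ‖(p : E)‖⁻¹ • p := rfl
    rw [h2, map_smul, norm_smul, norm_inv, norm_norm] at h1
    calc Real.sqrt 2 * ‖Lu p‖
        = ‖(p : E)‖ * (Real.sqrt 2 * (‖(p : E)‖⁻¹ * ‖Lu p‖)) := by
          field_simp
      _ ≤ ‖(p : E)‖ * Unorm f Df χbar x Eu :=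
          mul_le_mul_of_nonneg_left h1 hppos.le
      _ = Unorm f Df χbar x Eu * ‖(p : E)‖ := by ring
  -- boundedness of the CinvNorm family
  set Ps : E →L[ℝ] Es := LinearMap.toContinuousLinearMap πs with hPs_def
  set Pu : E →L[ℝ] Eu := LinearMap.toContinuousLinearMap πu with hPu_def
  have hKbdd : BddAbove (Set.range fun v : {v : E // ‖v‖ = 1} =>
      Real.sqrt ((2 * ∑' m : ℕ, ‖fwdC f Df m x ((πs v.1 : Es) : E)‖ ^ 2 *
            Real.exp (2 * m * χbar)) +
          2 * ∑' m : ℕ, ‖bwdC f Df m x ((πu v.1 : Eu) : E)‖ ^ 2 *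
            Real.exp (2 * m * χbar))) := by
    refine ⟨Real.sqrt (2 * (‖Ls‖ * ‖Ps‖) ^ 2 + 2 * (‖Lu‖ * ‖Pu‖) ^ 2), ?_⟩
    rintro r ⟨v, rfl⟩
    refine le_trans (le_of_eq (hΦK v)) ?_
    apply Real.sqrt_le_sqrt
    have h1 : ‖Ls (πs v.1)‖ ≤ ‖Ls‖ * ‖Ps‖ := by
      calc ‖Ls (πs v.1)‖ ≤ ‖Ls‖ * ‖πs v.1‖ := Ls.le_opNorm _
        _ = ‖Ls‖ * ‖Ps v.1‖ := rfl
        _ ≤ ‖Ls‖ * (‖Ps‖ * ‖v.1‖) :=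
            mul_le_mul_of_nonneg_left (Ps.le_opNorm _) (ContinuousLinearMap.opNorm_nonneg _)
        _ = ‖Ls‖ * ‖Ps‖ := by rw [v.2, mul_one]
    have h2 : ‖Lu (πu v.1)‖ ≤ ‖Lu‖ * ‖Pu‖ := by
      calc ‖Lu (πu v.1)‖ ≤ ‖Lu‖ * ‖πu v.1‖ := Lu.le_opNorm _
        _ = ‖Lu‖ * ‖Pu v.1‖ := rfl
        _ ≤ ‖Lu‖ * (‖Pu‖ * ‖v.1‖) :=
            mul_le_mul_of_nonneg_left (Pu.le_opNorm _) (ContinuousLinearMap.opNorm_nonneg _)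
        _ = ‖Lu‖ * ‖Pu‖ := by rw [v.2, mul_one]
    have h1' : ‖Ls (πs v.1)‖ ^ 2 ≤ (‖Ls‖ * ‖Ps‖) ^ 2 :=
      pow_le_pow_left₀ (norm_nonneg _) h1 2
    have h2' : ‖Lu (πu v.1)‖ ^ 2 ≤ (‖Lu‖ * ‖Pu‖) ^ 2 :=
      pow_le_pow_left₀ (norm_nonneg _) h2 2
    linarith [h1', h2']
  have hK_ub : ∀ v : {v : E // ‖v‖ = 1},
      Real.sqrt ((2 * ∑' m : ℕ, ‖fwdC f Df m x ((πs v.1 : Es) : E)‖ ^ 2 *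
            Real.exp (2 * m * χbar)) +
          2 * ∑' m : ℕ, ‖bwdC f Df m x ((πu v.1 : Eu) : E)‖ ^ 2 *
            Real.exp (2 * m * χbar))
        ≤ CinvNorm f Df χbar x Es Eu hc := fun v => le_ciSup hKbdd v
  have hK_ub' : ∀ y : E, ‖y‖ = 1 →
      Real.sqrt (2 * ‖Ls (πs y)‖ ^ 2 + 2 * ‖Lu (πu y)‖ ^ 2)
        ≤ CinvNorm f Df χbar x Es Eu hc := by
    intro y hy
    have h := hK_ub ⟨y, hy⟩
    rw [hΦK ⟨y, hy⟩] at h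
    exact h
  -- Part 1a : S ≤ K
  have hsqrt2a : ∀ a : ℝ, Real.sqrt (2 * a ^ 2 + 2 * 0 ^ 2) = Real.sqrt 2 * |a| := by
    intro a
    rw [show (2 * a ^ 2 + 2 * 0 ^ 2 : ℝ) = 2 * a ^ 2 by ring, Real.sqrt_mul h2nn,
      Real.sqrt_sq_eq_abs]
  have hS_le_K : Snorm f Df χbar x Es ≤ CinvNorm f Df χbar x Es Eu hc := by
    refine ciSup_le fun v => ?_
    refine le_trans (le_of_eq (hΦS v)) ?_
    have h := hK_ub' v.1 v.2.2
    have hps : πs v.1 = ⟨v.1, v.2.1⟩ :=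
      Submodule.linearProjOfIsCompl_apply_left hc ⟨v.1, v.2.1⟩
    have hpu : πu v.1 = 0 :=
      Submodule.linearProjOfIsCompl_apply_right' hc.symm v.2.1
    rw [hps, hpu, map_zero, norm_zero, hsqrt2a, abs_norm] at h
    exact h
  have hU_le_K : Unorm f Df χbar x Eu ≤ CinvNorm f Df χbar x Es Eu hc := by
    refine ciSup_le fun v => ?_
    refine le_trans (le_of_eq (hΦU v)) ?_
    have h := hK_ub' v.1 v.2.2
    have hps : πs v.1 = 0 :=
      Submodule.linearProjOfIsCompl_apply_right' hc v.2.1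
    have hpu : πu v.1 = ⟨v.1, v.2.1⟩ :=
      Submodule.linearProjOfIsCompl_apply_left hc.symm ⟨v.1, v.2.1⟩
    rw [hps, hpu, map_zero, norm_zero] at h
    rw [show (2 * (0:ℝ) ^ 2 + 2 * ‖Lu (⟨v.1, v.2.1⟩ : Eu)‖ ^ 2)
        = 2 * ‖Lu (⟨v.1, v.2.1⟩ : Eu)‖ ^ 2 + 2 * 0 ^ 2 by ring, hsqrt2a, abs_norm] at h
    exact h
  -- √2 ≤ S and √2 ≤ K
  have hS_ge : Real.sqrt 2 ≤ Snorm f Df χbar x Es := by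
    obtain ⟨v⟩ := instS
    have h1 : (1:ℝ) ≤ ‖Ls ⟨v.1, v.2.1⟩‖ :=
      le_trans (le_of_eq v.2.2.symm) (hnorm_le_s ⟨v.1, v.2.1⟩)
    calc Real.sqrt 2 = Real.sqrt 2 * 1 := (mul_one _).symm
      _ ≤ Real.sqrt 2 * ‖Ls ⟨v.1, v.2.1⟩‖ :=
          mul_le_mul_of_nonneg_left h1 (Real.sqrt_nonneg _)
      _ = Real.sqrt (2 * ∑' m : ℕ, ‖fwdC f Df m x v.1‖ ^ 2 * Real.exp (2 * m * χbar)) :=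
          (hΦS v).symm
      _ ≤ Snorm f Df χbar x Es := hS_ub v
  have hU_ge : Real.sqrt 2 ≤ Unorm f Df χbar x Eu := by
    obtain ⟨v⟩ := instU
    have h1 : (1:ℝ) ≤ ‖Lu ⟨v.1, v.2.1⟩‖ :=
      le_trans (le_of_eq v.2.2.symm) (hnorm_le_u ⟨v.1, v.2.1⟩)
    calc Real.sqrt 2 = Real.sqrt 2 * 1 := (mul_one _).symm
      _ ≤ Real.sqrt 2 * ‖Lu ⟨v.1, v.2.1⟩‖ :=
          mul_le_mul_of_nonneg_left h1 (Real.sqrt_nonneg _)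
      _ = Real.sqrt (2 * ∑' m : ℕ, ‖bwdC f Df m x v.1‖ ^ 2 * Real.exp (2 * m * χbar)) :=
          (hΦU v).symm
      _ ≤ Unorm f Df χbar x Eu := hU_ub v
  have hK2 : Real.sqrt 2 ≤ CinvNorm f Df χbar x Es Eu hc := hS_ge.trans hS_le_K
  have hKpos : (0:ℝ) < CinvNorm f Df χbar x Es Eu hc :=
    lt_of_lt_of_le (by positivity) hK2
  set K := CinvNorm f Df χbar x Es Eu hc with hK_def
  have hKsq : (2:ℝ) ≤ K ^ 2 := by
    calc (2:ℝ) = Real.sqrt 2 ^ 2 := (Real.sq_sqrt h2nn).symm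
      _ ≤ K ^ 2 := pow_le_pow_left₀ (Real.sqrt_nonneg _) hK2 2
  -- Part 1c : angle bound
  have hcK : maxCos Es Eu ≤ 1 - 2 / K ^ 2 := by
    refine ciSup_le fun p => ?_
    obtain ⟨⟨a, b⟩, ha, hb, ha1, hb1⟩ := p
    show |(inner ℝ a b : ℝ)| ≤ 1 - 2 / K ^ 2
    set t : ℝ := inner ℝ a b with ht_def
    -- replace b by ±b so that the inner ℝ product is |t|
    obtain ⟨b', hb', hb'1, hb't⟩ : ∃ b', b' ∈ Eu ∧ ‖b'‖ = 1 ∧ (inner ℝ a b' : ℝ) = |t| := by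
      rcases le_or_gt 0 t with h | h
      · exact ⟨b, hb, hb1, by rw [abs_of_nonneg h]⟩
      · exact ⟨-b, Eu.neg_mem hb, by rwa [norm_neg], by
          rw [inner_neg_right, abs_of_neg h]⟩
    set u : E := a - b' with hu_def
    have hu2 : ‖u‖ ^ 2 = 2 - 2 * |t| := by
      rw [hu_def, norm_sub_sq_real, ha1, hb'1, hb't]; ring
    have hu0 : u ≠ 0 := by
      intro h
      have hab : a = b' := sub_eq_zero.mp h
      have : a = 0 := Submodule.disjoint_def.mp hc.disjoint a ha (hab ▸ hb')
      rw [this, norm_zero] at ha1; norm_num at ha1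
    have hupos : (0:ℝ) < ‖u‖ := norm_pos_iff.2 hu0
    set y : E := ‖u‖⁻¹ • u with hy_def
    have hy1 : ‖y‖ = 1 := norm_smul_inv_norm hu0
    have hps : πs y = ‖u‖⁻¹ • (⟨a, ha⟩ : Es) := by
      rw [hy_def, map_smul, hu_def, map_sub]
      congr 1
      rw [show πs a = ⟨a, ha⟩ from Submodule.linearProjOfIsCompl_apply_left hc ⟨a, ha⟩,
        show πs b' = 0 from Submodule.linearProjOfIsCompl_apply_right' hc hb', sub_zero]
    have hpu : πu y = ‖u‖⁻¹ • (-(⟨b', hb'⟩ : Eu)) := by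
      rw [hy_def, map_smul, hu_def, map_sub]
      congr 1
      rw [show πu a = 0 from Submodule.linearProjOfIsCompl_apply_right' hc.symm ha,
        show πu b' = ⟨b', hb'⟩ from Submodule.linearProjOfIsCompl_apply_left hc.symm ⟨b', hb'⟩,
        zero_sub]
    have hLsb : ‖u‖⁻¹ ≤ ‖Ls (πs y)‖ := by
      rw [hps, map_smul, norm_smul, norm_inv, norm_norm]
      have h1 : (1:ℝ) ≤ ‖Ls ⟨a, ha⟩‖ :=
        le_trans (le_of_eq ha1.symm) (hnorm_le_s ⟨a, ha⟩)
      calc ‖u‖⁻¹ = ‖u‖⁻¹ * 1 := (mul_one _).symm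
        _ ≤ ‖u‖⁻¹ * ‖Ls ⟨a, ha⟩‖ := mul_le_mul_of_nonneg_left h1 (by positivity)
    have hLub : ‖u‖⁻¹ ≤ ‖Lu (πu y)‖ := by
      rw [hpu, map_smul, norm_smul, norm_inv, norm_norm, map_neg, norm_neg]
      have h1 : (1:ℝ) ≤ ‖Lu ⟨b', hb'⟩‖ :=
        le_trans (le_of_eq hb'1.symm) (hnorm_le_u ⟨b', hb'⟩)
      calc ‖u‖⁻¹ = ‖u‖⁻¹ * 1 := (mul_one _).symm
        _ ≤ ‖u‖⁻¹ * ‖Lu ⟨b', hb'⟩‖ := mul_le_mul_of_nonneg_left h1 (by positivity)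
    have hKv : 2 * ‖u‖⁻¹ ≤ K := by
      have h := hK_ub' y hy1
      refine le_trans ?_ h
      have h4 : 2 * ‖u‖⁻¹ = Real.sqrt (2 * ‖u‖⁻¹ ^ 2 + 2 * ‖u‖⁻¹ ^ 2) := by
        rw [show (2 * ‖u‖⁻¹ ^ 2 + 2 * ‖u‖⁻¹ ^ 2 : ℝ) = (2 * ‖u‖⁻¹) ^ 2 by ring,
          Real.sqrt_sq (by positivity)]
      rw [h4]
      apply Real.sqrt_le_sqrt
      have e1 : ‖u‖⁻¹ ^ 2 ≤ ‖Ls (πs y)‖ ^ 2 :=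
        pow_le_pow_left₀ (by positivity) hLsb 2
      have e2 : ‖u‖⁻¹ ^ 2 ≤ ‖Lu (πu y)‖ ^ 2 :=
        pow_le_pow_left₀ (by positivity) hLub 2
      linarith [e1, e2]
    -- conclude |t| ≤ 1 - 2/K²
    have huK : 2 / K ≤ ‖u‖ := by
      rw [div_le_iff₀ hKpos]
      have := mul_le_mul_of_nonneg_left hKv hupos.le
      calc (2:ℝ) = ‖u‖ * (2 * ‖u‖⁻¹) := by field_simp
        _ ≤ ‖u‖ * K := this
    have huK2 : 4 / K ^ 2 ≤ ‖u‖ ^ 2 := by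
      have := mul_le_mul huK huK (by positivity) hupos.le
      calc (4:ℝ) / K ^ 2 = 2 / K * (2 / K) := by ring
        _ ≤ ‖u‖ * ‖u‖ := this
        _ = ‖u‖ ^ 2 := by ring
    rw [hu2] at huK2
    have h42 : (4:ℝ) / K ^ 2 = 2 * (2 / K ^ 2) := by ring
    linarith [huK2, h42]
  have h2K2 : 2 / K ^ 2 ≤ 1 := by
    rw [div_le_one (by positivity)]; exact hKsq
  have h1c : 0 < 1 - maxCos Es Eu := by
    have : (0:ℝ) < 2 / K ^ 2 := by positivity
    linarith [hcK]
  have h1c2 : 0 < 1 - maxCos Es Eu ^ 2 := by nlinarith [hc0, hc1, h1c]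
  have hσpos : 0 < sinAngle Es Eu := Real.sqrt_pos.2 h1c2
  have hσ_le_K : (sinAngle Es Eu)⁻¹ ≤ K := by
    have hσ_ge : K⁻¹ ≤ sinAngle Es Eu := by
      have h1 : (K⁻¹) ^ 2 ≤ 1 - maxCos Es Eu ^ 2 := by
        have e1 : 1 - maxCos Es Eu ^ 2
            = (1 - maxCos Es Eu) * (1 + maxCos Es Eu) := by ring
        have e2 : 2 / K ^ 2 * 1 ≤ (1 - maxCos Es Eu) * (1 + maxCos Es Eu) := by
          apply mul_le_mul (by linarith [hcK]) (by linarith [hc0]) (by norm_num)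
            (by linarith [hcK, h2K2])
        have hK2pos : (0:ℝ) < K ^ 2 := pow_pos hKpos 2
        have e3 : (K⁻¹) ^ 2 ≤ 2 / K ^ 2 := by
          rw [inv_pow, inv_eq_one_div]
          exact (div_le_div_iff_of_pos_right hK2pos).2 one_le_two
        linarith [e1 ▸ e2, e3]
      calc K⁻¹ = Real.sqrt ((K⁻¹) ^ 2) := (Real.sqrt_sq (by positivity)).symm
        _ ≤ Real.sqrt (1 - maxCos Es Eu ^ 2) := Real.sqrt_le_sqrt h1
    calc (sinAngle Es Eu)⁻¹ ≤ (K⁻¹)⁻¹ :=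
        inv_anti₀ (by positivity) hσ_ge
      _ = K := inv_inv K
  -- assemble part 1
  refine ⟨max_le hS_le_K (max_le hU_le_K hσ_le_K), ?_⟩
  -- Part 2 : upper bound
  set ρ := max (Snorm f Df χbar x Es) (max (Unorm f Df χbar x Eu) (sinAngle Es Eu)⁻¹)
    with hρ_def
  have hSρ : Snorm f Df χbar x Es ≤ ρ := le_max_left _ _
  have hUρ : Unorm f Df χbar x Eu ≤ ρ := le_max_right _ _ |>.trans' (le_max_left _ _)
  have hσρ : (sinAngle Es Eu)⁻¹ ≤ ρ := le_max_right _ _ |>.trans' (le_max_right _ _)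
  have hS0 : 0 ≤ Snorm f Df χbar x Es := le_trans (Real.sqrt_nonneg _) hS_ge
  have hU0 : 0 ≤ Unorm f Df χbar x Eu := le_trans (Real.sqrt_nonneg _) hU_ge
  have hρ0 : 0 ≤ ρ := le_trans hS0 hSρ
  -- ρ² ≥ 1/(1-c²)
  have hρσ : 1 / (1 - maxCos Es Eu) ≤ 2 * ρ ^ 2 := by
    have h1 : (1 - maxCos Es Eu ^ 2)⁻¹ ≤ ρ ^ 2 := by
      have e0 : (sinAngle Es Eu) ^ 2 = 1 - maxCos Es Eu ^ 2 :=
        Real.sq_sqrt h1c2.le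
      have e1 : ((sinAngle Es Eu)⁻¹) ^ 2 ≤ ρ ^ 2 :=
        pow_le_pow_left₀ (inv_nonneg.2 hσpos.le) hσρ 2
      rwa [inv_pow, e0] at e1
    have h2 : 1 / (1 - maxCos Es Eu) ≤ 2 * (1 - maxCos Es Eu ^ 2)⁻¹ := by
      rw [show (2 * (1 - maxCos Es Eu ^ 2)⁻¹ : ℝ) = 2 / (1 - maxCos Es Eu ^ 2) by ring,
        div_le_div_iff₀ h1c h1c2]
      linarith [sq_nonneg (1 - maxCos Es Eu)]
    linarith [h2, mul_le_mul_of_nonneg_left h1 h2nn]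
  refine ciSup_le fun v => ?_
  refine le_trans (le_of_eq (hΦK v)) ?_
  set vs := πs v.1 with hvs_def
  set vu := πu v.1 with hvu_def
  have hsplit : ((vs : E)) + ((vu : E)) = v.1 :=
    Submodule.projection_add_projection_eq_self hc v.1
  clear_value vs vu
  have hns : 2 * ‖Ls vs‖ ^ 2 ≤ Snorm f Df χbar x Es ^ 2 * ‖(vs : E)‖ ^ 2 := by
    have h := key_s vs
    have hsq : (Real.sqrt 2 * ‖Ls vs‖) ^ 2 ≤ (Snorm f Df χbar x Es * ‖(vs : E)‖) ^ 2 :=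
      pow_le_pow_left₀ (by positivity) h 2
    calc 2 * ‖Ls vs‖ ^ 2 = (Real.sqrt 2 * ‖Ls vs‖) ^ 2 := by
          rw [mul_pow, Real.sq_sqrt h2nn]
      _ ≤ (Snorm f Df χbar x Es * ‖(vs : E)‖) ^ 2 := hsq
      _ = Snorm f Df χbar x Es ^ 2 * ‖(vs : E)‖ ^ 2 := by rw [mul_pow]
  have hnu : 2 * ‖Lu vu‖ ^ 2 ≤ Unorm f Df χbar x Eu ^ 2 * ‖(vu : E)‖ ^ 2 := by
    have h := key_u vu
    have hsq : (Real.sqrt 2 * ‖Lu vu‖) ^ 2 ≤ (Unorm f Df χbar x Eu * ‖(vu : E)‖) ^ 2 :=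
      pow_le_pow_left₀ (by positivity) h 2
    calc 2 * ‖Lu vu‖ ^ 2 = (Real.sqrt 2 * ‖Lu vu‖) ^ 2 := by
          rw [mul_pow, Real.sq_sqrt h2nn]
      _ ≤ (Unorm f Df χbar x Eu * ‖(vu : E)‖) ^ 2 := hsq
      _ = Unorm f Df χbar x Eu ^ 2 * ‖(vu : E)‖ ^ 2 := by rw [mul_pow]
  have hsum_norm : ‖(vs : E)‖ ^ 2 + ‖(vu : E)‖ ^ 2 ≤ 1 / (1 - maxCos Es Eu) := by
    have h1 : (1:ℝ) = ‖(vs : E) + (vu : E)‖ ^ 2 := by rw [hsplit, v.2]; norm_num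
    rw [norm_add_sq_real] at h1
    have h2 := hinner (vs : E) vs.2 (vu : E) vu.2
    have h3 := neg_abs_le (inner ℝ ((vs : E)) ((vu : E)) : ℝ)
    have h4 := two_mul_le_add_sq ‖(vs : E)‖ ‖(vu : E)‖
    rw [le_div_iff₀ h1c]
    have h5 : maxCos Es Eu * (2 * (‖(vs : E)‖ * ‖(vu : E)‖))
        ≤ maxCos Es Eu * (‖(vs : E)‖ ^ 2 + ‖(vu : E)‖ ^ 2) :=
      mul_le_mul_of_nonneg_left (by linarith [h4]) hc0
    linarith [h1, h2, h3, h5]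
  have hmain : 2 * ‖Ls vs‖ ^ 2 + 2 * ‖Lu vu‖ ^ 2 ≤ 2 * (ρ ^ 2) ^ 2 := by
    have e1 : Snorm f Df χbar x Es ^ 2 ≤ ρ ^ 2 := by gcongr
    have e2 : Unorm f Df χbar x Eu ^ 2 ≤ ρ ^ 2 := by gcongr
    have e3a : 2 * ‖Ls vs‖ ^ 2 ≤ ρ ^ 2 * ‖(vs : E)‖ ^ 2 :=
      hns.trans (mul_le_mul_of_nonneg_right e1 (sq_nonneg _))
    have e3b : 2 * ‖Lu vu‖ ^ 2 ≤ ρ ^ 2 * ‖(vu : E)‖ ^ 2 :=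
      hnu.trans (mul_le_mul_of_nonneg_right e2 (sq_nonneg _))
    have e3 : 2 * ‖Ls vs‖ ^ 2 + 2 * ‖Lu vu‖ ^ 2
        ≤ ρ ^ 2 * (‖(vs : E)‖ ^ 2 + ‖(vu : E)‖ ^ 2) := by
      rw [mul_add]; exact add_le_add e3a e3b
    have e4 : ρ ^ 2 * (‖(vs : E)‖ ^ 2 + ‖(vu : E)‖ ^ 2)
        ≤ ρ ^ 2 * (1 / (1 - maxCos Es Eu)) :=
      mul_le_mul_of_nonneg_left hsum_norm (sq_nonneg _)
    have e5 : ρ ^ 2 * (1 / (1 - maxCos Es Eu)) ≤ ρ ^ 2 * (2 * ρ ^ 2) :=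
      mul_le_mul_of_nonneg_left hρσ (sq_nonneg _)
    calc 2 * ‖Ls vs‖ ^ 2 + 2 * ‖Lu vu‖ ^ 2
        ≤ ρ ^ 2 * (1 / (1 - maxCos Es Eu)) := e3.trans e4
      _ ≤ ρ ^ 2 * (2 * ρ ^ 2) := e5
      _ = 2 * (ρ ^ 2) ^ 2 := by ring
  calc Real.sqrt (2 * ‖Ls vs‖ ^ 2 + 2 * ‖Lu vu‖ ^ 2)
      ≤ Real.sqrt (2 * (ρ ^ 2) ^ 2) := Real.sqrt_le_sqrt hmain
    _ = Real.sqrt 2 * ρ ^ 2 := by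
        rw [Real.sqrt_mul h2nn, Real.sqrt_sq (sq_nonneg ρ)]

end
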